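/- arXiv:1103.0495 — 3 statements merged into one kernel-verified Lean document; each statement's English description precedes it below -/
import Mathlib

section
/- Let α > 0 and let (u₁,…,u_n) ∈ (0,∞)ⁿ be a positive solution of the discrete system (Sα). Assume the standing hypotheses (H1)–(H3). Define C₁(α) := G⁻¹(G(g⁻¹(α/√(1−d))) + α²/2), M := g₁′(C₁(α)), and Ĉ(α) := 1 + g₂′(C₁(α))·α² / (2·g₂(g⁻¹(α)/e^M)·G′(g⁻¹(α)/e^M)). Then u₁ < g⁻¹(α·Ĉ(α)) and u_n < G⁻¹(G(g⁻¹(α·Ĉ(α))) + α²/2). -/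
noncomputable section

/-- `Useq g1 h k` is the function `U_{k+1}` (0-indexed version of the recursion). -/
def Useq (g1 : ℝ → ℝ) (h : ℝ) : ℕ → ℝ → ℝ
  | 0 => fun x => x
  | 1 => fun x => x + h ^ 2 / 2 * g1 x
  | k + 2 => fun x =>
      2 * Useq g1 h (k + 1) x - Useq g1 h k x + h ^ 2 * g1 (Useq g1 h (k + 1) x)

/-- `discU g1 h k` is the function `U_k` from the paper, for `1 ≤ k`. -/
def discU (g1 : ℝ → ℝ) (h : ℝ) (k : ℕ) : ℝ → ℝ := Useq g1 h (k - 1)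

/-- The function `A(u₁)` from the paper. -/
def discA (g1 g2 : ℝ → ℝ) (h : ℝ) (n : ℕ) (x : ℝ) : ℝ :=
  ((discU g1 h n x - discU g1 h (n - 1) x) / h + h / 2 * g1 (discU g1 h n x)) /
    g2 (discU g1 h n x)

/-- `(u₁, …, u_n)` (encoded as `u : ℕ → ℝ` on indices `1,…,n`) is a positive solution of
the discrete system `(Sα)`. -/
def IsSolution (g1 g2 : ℝ → ℝ) (n : ℕ) (h α : ℝ) (u : ℕ → ℝ) : Prop :=
  (∀ k, 1 ≤ k → k ≤ n → 0 < u k) ∧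
  u 2 - u 1 = h ^ 2 / 2 * g1 (u 1) ∧
  (∀ k, 2 ≤ k → k ≤ n - 1 → u (k + 1) - 2 * u k + u (k - 1) = h ^ 2 * g1 (u k)) ∧
  u n - u (n - 1) = -(h ^ 2 / 2) * g1 (u n) + h * α * g2 (u n)

/-- `G₁`, the primitive of `g₁` vanishing at `0`. -/
def primG1 (g1 : ℝ → ℝ) (x : ℝ) : ℝ := ∫ t in (0:ℝ)..x, g1 t

/-- `g := g₁/g₂`. -/
def gg (g1 g2 : ℝ → ℝ) (x : ℝ) : ℝ := g1 x / g2 x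

/-- `G := G₁/g₂²`. -/
def GG (g1 g2 : ℝ → ℝ) (x : ℝ) : ℝ := primG1 g1 x / (g2 x) ^ 2

/-- The trapezoidal-rule error `E` as a function of `u₁`. -/
def trapError (g1 : ℝ → ℝ) (h : ℝ) (n : ℕ) (x : ℝ) : ℝ :=
  (∑ k ∈ Finset.Icc 1 (n - 1),
    (g1 (discU g1 h k x) + g1 (discU g1 h (k + 1) x)) / 2 *
      (discU g1 h (k + 1) x - discU g1 h k x)) -
  (primG1 g1 (discU g1 h n x) - primG1 g1 (discU g1 h 1 x))

/-- The Jacobian matrix `J(α,u)` of the system `(Sα)`. -/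
def Jmat (g1 g2 : ℝ → ℝ) (n : ℕ) (h α : ℝ) (u : ℕ → ℝ) : Matrix (Fin n) (Fin n) ℝ :=
  Matrix.of fun i j =>
    if i = j then
      (if (i : ℕ) = 0 then 1 + h ^ 2 / 2 * deriv g1 (u 1)
       else if (i : ℕ) = n - 1 then
         1 + h ^ 2 / 2 * deriv g1 (u n) - h * α * deriv g2 (u n)
       else 2 + h ^ 2 * deriv g1 (u ((i : ℕ) + 1)))
    else if (i : ℕ) + 1 = (j : ℕ) ∨ (j : ℕ) + 1 = (i : ℕ) then -1 else 0
/-!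
Write `a = u₁`, `b = u_n`. Summing the scheme gives `u_{k+2} - u_{k+1} = h² c_k` with
`c_k = g₁(u₁)/2 + g₁(u₂) + ⋯ + g₁(u_{k+1})`, and the boundary condition becomes
`α g₂(b) = h (c_{n-2} + g₁(b)/2)`. Since `u` increases, this yields
`g₁(a) < α g₂(b) ≤ g₁(b)` and `b - a ≥ g₁(a)/2`. Comparing the trapezoidal sums of the scheme
with `G₁` (convexity of `g₁`) gives the discrete energy inequality
`2 (G₁(b) - G₁(a)) ≤ (α g₂(b))²`, hence `G(b) ≤ G(a) + α²/2`.

By (H2), `G' ≥ (1 - d) g₁ / g₂²`, and by (H3) `G` is convex; together with the gap `b - a`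
this bounds `g(a) ≤ α / √(1 - d)` and then `b ≤ C₁(α)`. On `(0, C₁]` we have `g₁(x) ≤ M x`, so
a discrete Gronwall argument gives `b ≤ a e^M`, while `α ≤ g(b)` gives `g⁻¹(α) ≤ b`; thus
`m := g⁻¹(α)/e^M ≤ a`. Convexity of `g₂` and of `G` then bound `g₂(b)/g₂(a) ≤ Ĉ(α)`, and
finally `g(a) < α g₂(b)/g₂(a) ≤ α Ĉ(α)` and `G(b) ≤ G(a) + α²/2`.
-/

open Set intervalIntegral

section Convexity

variable {f : ℝ → ℝ} {S : Set ℝ} {a b : ℝ}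

theorem ConvexOn.deriv_mul_sub_le_sub (hf : ConvexOn ℝ S f) (ha : a ∈ S) (hb : b ∈ S)
    (hab : a ≤ b) (hfd : DifferentiableAt ℝ f a) : deriv f a * (b - a) ≤ f b - f a := by
  rcases hab.eq_or_lt with rfl | hab
  · simp
  have := hf.deriv_le_slope ha hb hab hfd
  rwa [slope_def_field, le_div_iff₀ (sub_pos.2 hab)] at this

theorem ConvexOn.sub_le_deriv_mul_sub (hf : ConvexOn ℝ S f) (ha : a ∈ S) (hb : b ∈ S)
    (hab : a ≤ b) (hfd : DifferentiableAt ℝ f b) : f b - f a ≤ deriv f b * (b - a) := by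
  rcases hab.eq_or_lt with rfl | hab
  · simp
  have := hf.slope_le_deriv ha hb hab hfd
  rwa [slope_def_field, div_le_iff₀ (sub_pos.2 hab)] at this

theorem ConvexOn.le_deriv_mul (hf : ConvexOn ℝ (Ici 0) f) (hfd : Differentiable ℝ f)
    (hf0 : f 0 = 0) (ha : 0 ≤ a) (hab : a ≤ b) : f a ≤ deriv f b * a := by
  have := hf.sub_le_deriv_mul_sub self_mem_Ici ha ha (hfd a)
  rw [hf0, sub_zero, sub_zero] at this
  exact this.trans <| mul_le_mul_of_nonneg_right
    (hf.monotoneOn_deriv (fun y _ => hfd y) ha (ha.trans hab) hab) ha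

theorem ConvexOn.intervalIntegral_le_trapezoid (hf : ConvexOn ℝ (Icc a b) f)
    (hfi : IntervalIntegrable f MeasureTheory.volume a b) (hab : a ≤ b) :
    ∫ t in a..b, f t ≤ (f a + f b) / 2 * (b - a) := by
  rcases hab.eq_or_lt with rfl | hab
  · simp
  have hba : 0 < b - a := sub_pos.2 hab
  have hchord : ∀ t ∈ Ioo a b, f t ≤ ((b - t) * f a + (t - a) * f b) / (b - a) := by
    intro t ⟨hat, htb⟩
    rw [le_div_iff₀ hba]
    linarith [hf.secant_mono_aux1 (left_mem_Icc.2 hab.le) (right_mem_Icc.2 hab.le) hat htb]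
  have hii : ∀ g : ℝ → ℝ, Continuous g → IntervalIntegrable g MeasureTheory.volume a b :=
    fun g hg => hg.intervalIntegrable a b
  calc ∫ t in a..b, f t ≤ ∫ t in a..b, ((b - t) * f a + (t - a) * f b) / (b - a) :=
        integral_mono_on_of_le_Ioo hab.le hfi (hii _ (by fun_prop)) hchord
    _ = (f a + f b) / 2 * (b - a) := by
        rw [integral_div, integral_add (hii _ (by fun_prop)) (hii _ (by fun_prop)),
          integral_mul_const, integral_mul_const, integral_sub (hii _ (by fun_prop))
          (hii _ (by fun_prop)), integral_sub (hii _ (by fun_prop)) (hii _ (by fun_prop))]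
        simp only [integral_const, integral_id, smul_eq_mul]
        field_simp
        ring

theorem convexOn_of_contDiffOn_deriv2_nonneg (hS : Convex ℝ S) (hf : ContinuousOn f S)
    (hf2 : ContDiffOn ℝ 2 f (interior S)) (hf'' : ∀ x ∈ interior S, 0 ≤ deriv (deriv f) x) :
    ConvexOn ℝ S f :=
  convexOn_of_deriv2_nonneg hS hf (hf2.differentiableOn (by norm_num))
    ((hf2.deriv_of_isOpen isOpen_interior (m := 1) le_rfl).differentiableOn one_ne_zero) hf''

theorem convexOn_Ici_of_deriv2_nonneg (hf : ContDiff ℝ 2 f)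
    (hf'' : ∀ x > 0, 0 ≤ deriv (deriv f) x) : ConvexOn ℝ (Ici 0) f :=
  convexOn_of_contDiffOn_deriv2_nonneg (convex_Ici 0) hf.continuous.continuousOn
    hf.contDiffOn (by simpa using hf'')

theorem strictMonoOn_Ici_of_deriv_pos (hf : Continuous f) (hf' : ∀ x > 0, 0 < deriv f x) :
    StrictMonoOn f (Ici 0) :=
  strictMonoOn_of_deriv_pos (convex_Ici 0) hf.continuousOn (by rwa [interior_Ici])

end Convexity

theorem StrictMonoOn.lt_iff_apply_lt_of_apply_eq {f : ℝ → ℝ} {s : Set ℝ}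
    (hf : StrictMonoOn f s) {x y z : ℝ} (hx : x ∈ s) (hz : z ∈ s) (hfz : f z = y) :
    x < z ↔ f x < y :=
  hfz ▸ (hf.lt_iff_lt hx hz).symm

theorem StrictMonoOn.le_iff_apply_le_of_apply_eq {f : ℝ → ℝ} {s : Set ℝ}
    (hf : StrictMonoOn f s) {x y z : ℝ} (hx : x ∈ s) (hz : z ∈ s) (hfz : f z = y) :
    x ≤ z ↔ f x ≤ y :=
  hfz ▸ (hf.le_iff_le hx hz).symm

section Nonlinearities

variable {g1 g2 : ℝ → ℝ}

theorem hasDerivAt_primG1 (hg1 : Continuous g1) (x : ℝ) : HasDerivAt (primG1 g1) (g1 x) x :=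
  integral_hasDerivAt_right (hg1.intervalIntegrable _ _) (hg1.stronglyMeasurableAtFilter _ _)
    hg1.continuousAt

theorem deriv_primG1 (hg1 : Continuous g1) : deriv (primG1 g1) = g1 :=
  funext fun x => (hasDerivAt_primG1 hg1 x).deriv

theorem contDiff_primG1 {n : ℕ} (hg1 : ContDiff ℝ n g1) : ContDiff ℝ (n + 1) (primG1 g1) :=
  contDiff_succ_iff_deriv.2 ⟨fun x => (hasDerivAt_primG1 hg1.continuous x).differentiableAt,
    by simp, by rwa [deriv_primG1 hg1.continuous]⟩

theorem primG1_sub_primG1 (hg1 : Continuous g1) (a b : ℝ) :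
    primG1 g1 b - primG1 g1 a = ∫ t in a..b, g1 t :=
  integral_interval_sub_left (hg1.intervalIntegrable _ _) (hg1.intervalIntegrable _ _)

theorem primG1_pos (hg1c : Continuous g1) (hg1 : ∀ x > 0, 0 < g1 x) {x : ℝ} (hx : 0 < x) :
    0 < primG1 g1 x :=
  intervalIntegral_pos_of_pos_on (hg1c.intervalIntegrable _ _) (fun t ht => hg1 t ht.1) hx

theorem hasDerivAt_GG (hg1 : Continuous g1) {x : ℝ} (hg2 : DifferentiableAt ℝ g2 x)
    (hx : g2 x ≠ 0) :
    HasDerivAt (GG g1 g2) (g1 x / g2 x ^ 2 - 2 * primG1 g1 x * deriv g2 x / g2 x ^ 3) x := by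
  refine ((hasDerivAt_primG1 hg1 x).div (hg2.hasDerivAt.fun_pow 2)
    (pow_ne_zero 2 hx)).congr_deriv ?_
  field_simp
  ring

theorem convexOn_GG (hg1 : ContDiff ℝ 1 g1) (hg2 : ContDiff ℝ 2 g2)
    (hg2pos : ∀ x > 0, 0 < g2 x) (hH3 : ∀ x > 0, 0 ≤ deriv (deriv (GG g1 g2)) x) :
    ConvexOn ℝ (Ioi 0) (GG g1 g2) := by
  have hGG : ContDiffOn ℝ 2 (GG g1 g2) (Ioi 0) := (contDiff_primG1 hg1).contDiffOn.div
    (hg2.pow 2).contDiffOn fun x hx => pow_ne_zero 2 (hg2pos x hx).ne'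
  exact convexOn_of_contDiffOn_deriv2_nonneg (convex_Ioi 0) hGG.continuousOn
    (by simpa using hGG) (by simpa using hH3)

theorem one_sub_mul_div_sq_le_deriv_GG {d x : ℝ} (hg1 : Continuous g1)
    (hg2 : DifferentiableAt ℝ g2 x) (hg2x : 0 < g2 x) (hG1x : 0 < primG1 g1 x)
    (hH2 : 0 ≤ d * g1 x / primG1 g1 x - 2 * deriv g2 x / g2 x) :
    (1 - d) * g1 x / g2 x ^ 2 ≤ deriv (GG g1 g2) x := by
  rw [(hasDerivAt_GG hg1 hg2 hg2x.ne').deriv]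
  have : 2 * primG1 g1 x * deriv g2 x ≤ d * g1 x * g2 x := by
    rw [sub_nonneg, div_le_div_iff₀ hg2x hG1x] at hH2
    linarith
  have : 2 * primG1 g1 x * deriv g2 x / g2 x ^ 3 ≤ d * g1 x / g2 x ^ 2 := by
    rw [div_le_div_iff₀ (by positivity) (by positivity)]
    nlinarith [pow_pos hg2x 2]
  rw [sub_mul, one_mul, sub_div]
  linarith

theorem gg_le_div_sqrt {a b d α : ℝ} (hGG : ConvexOn ℝ (Ioi 0) (GG g1 g2))
    (hGGd : DifferentiableAt ℝ (GG g1 g2) a)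
    (hGGa : (1 - d) * g1 a / g2 a ^ 2 ≤ deriv (GG g1 g2) a)
    (ha : 0 < a) (hab : a ≤ b) (hg1a : 0 < g1 a) (hg2a : 0 < g2 a) (hd : d < 1) (hα : 0 ≤ α)
    (hgap : g1 a / 2 ≤ b - a) (hGGab : 2 * (GG g1 g2 b - GG g1 g2 a) ≤ α ^ 2) :
    gg g1 g2 a ≤ α / Real.sqrt (1 - d) := by
  have hslope := hGG.deriv_mul_sub_le_sub ha (ha.trans_le hab) hab hGGd
  have hsq : (1 - d) * gg g1 g2 a ^ 2 ≤ α ^ 2 :=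
    calc (1 - d) * gg g1 g2 a ^ 2 = 2 * ((1 - d) * g1 a / g2 a ^ 2 * (g1 a / 2)) := by
          unfold gg; field_simp
      _ ≤ 2 * (deriv (GG g1 g2) a * (b - a)) := by
          gcongr
          exact (div_nonneg (mul_nonneg (by linarith) hg1a.le) (by positivity)).trans hGGa
      _ ≤ α ^ 2 := by linarith
  have hgg : 0 ≤ gg g1 g2 a := (div_pos hg1a hg2a).le
  rw [le_div_iff₀ (Real.sqrt_pos.2 (by linarith)), ← Real.sqrt_sq hα, ← Real.sqrt_sq hgg,
    ← Real.sqrt_mul (sq_nonneg _)]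
  exact Real.sqrt_le_sqrt (by linarith)

theorem g2_div_g2_le {a b m C α : ℝ} (hg2 : ConvexOn ℝ (Ici 0) g2)
    (hg2d : Differentiable ℝ g2) (hGG : ConvexOn ℝ (Ioi 0) (GG g1 g2))
    (hGGd : ∀ x > 0, DifferentiableAt ℝ (GG g1 g2) x) (hm : 0 < m) (hma : m ≤ a) (hab : a ≤ b)
    (hbC : b ≤ C) (hg2m : 0 < g2 m) (hg2ma : g2 m ≤ g2 a)
    (hg2C : 0 ≤ deriv g2 C) (hGGm : 0 < deriv (GG g1 g2) m)
    (hGGab : 2 * (GG g1 g2 b - GG g1 g2 a) ≤ α ^ 2) :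
    g2 b / g2 a ≤ 1 + deriv g2 C * α ^ 2 / (2 * g2 m * deriv (GG g1 g2) m) := by
  have ha : 0 < a := hm.trans_le hma
  have hb : 0 < b := ha.trans_le hab
  have hgrowth : g2 b - g2 a ≤ deriv g2 C * (b - a) :=
    (hg2.sub_le_deriv_mul_sub ha.le hb.le hab (hg2d b)).trans <| mul_le_mul_of_nonneg_right
      (hg2.monotoneOn_deriv (fun y _ => hg2d y) hb.le (hb.le.trans hbC) hbC) (sub_nonneg.2 hab)
  have hspread : deriv (GG g1 g2) m * (b - a) ≤ α ^ 2 / 2 :=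
    calc deriv (GG g1 g2) m * (b - a) ≤ deriv (GG g1 g2) a * (b - a) :=
          mul_le_mul_of_nonneg_right (hGG.monotoneOn_deriv hGGd hm ha hma) (sub_nonneg.2 hab)
      _ ≤ GG g1 g2 b - GG g1 g2 a := hGG.deriv_mul_sub_le_sub ha hb hab (hGGd a ha)
      _ ≤ α ^ 2 / 2 := by linarith
  calc g2 b / g2 a = 1 + (g2 b - g2 a) / g2 a := by
        rw [sub_div, div_self (hg2m.trans_le hg2ma).ne']; ring
    _ ≤ 1 + deriv g2 C * (b - a) / g2 m := by
        gcongr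
    _ ≤ 1 + deriv g2 C * α ^ 2 / (2 * g2 m * deriv (GG g1 g2) m) := by
        gcongr 1 + ?_
        rw [div_le_div_iff₀ hg2m (by positivity)]
        have := mul_le_mul_of_nonneg_left hspread (mul_nonneg hg2C hg2m.le)
        linarith

end Nonlinearities

section Discrete

variable {g1 g2 : ℝ → ℝ} {N : ℕ} {h α : ℝ} {u : ℕ → ℝ}

/-- `h ^ 2 * slopeSum g1 u K` is the increment `u (K + 2) - u (K + 1)` of a solution. -/
def slopeSum (g1 : ℝ → ℝ) (u : ℕ → ℝ) (K : ℕ) : ℝ :=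
  g1 (u 1) / 2 + ∑ i ∈ Finset.range K, g1 (u (i + 2))

theorem slopeSum_zero : slopeSum g1 u 0 = g1 (u 1) / 2 := by simp [slopeSum]

theorem slopeSum_succ (K : ℕ) : slopeSum g1 u (K + 1) = slopeSum g1 u K + g1 (u (K + 2)) := by
  simp only [slopeSum, Finset.sum_range_succ]; ring

namespace IsSolution

theorem pos (hu : IsSolution g1 g2 N h α u) {k : ℕ} (hk1 : 1 ≤ k) (hkN : k ≤ N) : 0 < u k :=
  hu.1 k hk1 hkN

theorem sub_eq_sq_mul_slopeSum (hu : IsSolution g1 g2 (N + 2) h α u) {K : ℕ} (hK : K ≤ N) :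
    u (K + 2) - u (K + 1) = h ^ 2 * slopeSum g1 u K := by
  obtain ⟨-, hfirst, hrec, -⟩ := hu
  induction K with
  | zero => rw [slopeSum_zero, hfirst]; ring
  | succ K ih =>
    have hrec := hrec (K + 2) (by omega) (by omega)
    rw [show K + 2 - 1 = K + 1 by omega] at hrec
    rw [slopeSum_succ, mul_add, ← ih (by omega)]
    linarith

theorem boundary_eq (hu : IsSolution g1 g2 (N + 2) h α u) (hh : h ≠ 0) :
    α * g2 (u (N + 2)) = h * (slopeSum g1 u N + g1 (u (N + 2)) / 2) := by
  have hbd := hu.2.2.2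
  rw [show N + 2 - 1 = N + 1 by omega, hu.sub_eq_sq_mul_slopeSum le_rfl] at hbd
  apply mul_left_cancel₀ hh
  linear_combination -hbd

theorem slopeSum_pos (hu : IsSolution g1 g2 (N + 2) h α u) (hg1 : ∀ x > 0, 0 < g1 x)
    {K : ℕ} (hK : K ≤ N) : 0 < slopeSum g1 u K :=
  add_pos_of_pos_of_nonneg (half_pos (hg1 _ (hu.pos le_rfl (by omega))))
    (Finset.sum_nonneg fun i hi => (hg1 _ (hu.pos (by omega)
      (by simp at hi; omega))).le)

theorem strictMonoOn (hu : IsSolution g1 g2 (N + 2) h α u) (hh : h ≠ 0)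
    (hg1 : ∀ x > 0, 0 < g1 x) : StrictMonoOn u (Icc 1 (N + 2)) := by
  refine strictMonoOn_of_lt_add_one ordConnected_Icc fun k _ hk hk1 => ?_
  obtain ⟨K, rfl⟩ : ∃ K, k = K + 1 := ⟨k - 1, by grind⟩
  have hK : K ≤ N := by grind
  show u (K + 1) < u (K + 2)
  have hinc := hu.sub_eq_sq_mul_slopeSum hK
  have : 0 < h ^ 2 * slopeSum g1 u K := mul_pos (by positivity) (hu.slopeSum_pos hg1 hK)
  linarith

theorem g1_le_g1 (hu : IsSolution g1 g2 (N + 2) h α u) (hh : h ≠ 0) (hg1 : ∀ x > 0, 0 < g1 x)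
    (hg1m : MonotoneOn g1 (Ioi 0)) {i j : ℕ} (hi : 1 ≤ i) (hij : i ≤ j) (hj : j ≤ N + 2) :
    g1 (u i) ≤ g1 (u j) :=
  hg1m (hu.pos hi (by omega)) (hu.pos (by omega) hj)
    ((hu.strictMonoOn hh hg1).monotoneOn ⟨hi, by omega⟩ ⟨by omega, hj⟩ hij)

theorem slopeSum_le (hu : IsSolution g1 g2 (N + 2) h α u) (hh : h ≠ 0)
    (hg1 : ∀ x > 0, 0 < g1 x) (hg1m : MonotoneOn g1 (Ioi 0)) {K : ℕ} (hK : K ≤ N) :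
    slopeSum g1 u K ≤ (K + 1 / 2) * g1 (u (K + 1)) := by
  have h1 := hu.g1_le_g1 hh hg1 hg1m le_rfl (by omega : 1 ≤ K + 1) (by omega)
  have hsum := Finset.sum_le_card_nsmul (Finset.range K) (fun i => g1 (u (i + 2)))
    (g1 (u (K + 1))) fun i hi => hu.g1_le_g1 hh hg1 hg1m (by omega)
      (by simp at hi; omega) (by omega)
  simp only [Finset.card_range, nsmul_eq_mul] at hsum
  rw [slopeSum]
  linarith

theorem le_slopeSum (hu : IsSolution g1 g2 (N + 2) h α u) (hh : h ≠ 0)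
    (hg1 : ∀ x > 0, 0 < g1 x) (hg1m : MonotoneOn g1 (Ioi 0)) {K : ℕ} (hK : K ≤ N) :
    (K + 1 / 2) * g1 (u 1) ≤ slopeSum g1 u K := by
  have hsum := Finset.card_nsmul_le_sum (Finset.range K) (fun i => g1 (u (i + 2)))
    (g1 (u 1)) fun i hi => hu.g1_le_g1 hh hg1 hg1m le_rfl (by omega)
      (by simp at hi; omega)
  simp only [Finset.card_range, nsmul_eq_mul] at hsum
  rw [slopeSum]
  linarith

theorem g1_lt_mul_g2 (hu : IsSolution g1 g2 (N + 2) h α u) (hhN : h * (N + 1) = 1)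
    (hg1 : ∀ x > 0, 0 < g1 x) (hg1m : StrictMonoOn g1 (Ioi 0)) :
    g1 (u 1) < α * g2 (u (N + 2)) := by
  have hh : 0 < h := pos_of_mul_pos_left (hhN ▸ one_pos) (by positivity)
  have hlow := hu.le_slopeSum hh.ne' hg1 hg1m.monotoneOn le_rfl
  have hlt : g1 (u 1) < g1 (u (N + 2)) :=
    hg1m (hu.pos le_rfl (by omega)) (hu.pos (by omega) le_rfl)
      (hu.strictMonoOn hh.ne' hg1 ⟨le_rfl, by omega⟩ ⟨by omega, le_rfl⟩ (by omega))
  rw [hu.boundary_eq hh.ne']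
  calc g1 (u 1) = h * ((N + 1) * g1 (u 1)) := by rw [← mul_assoc, hhN, one_mul]
    _ < h * (slopeSum g1 u N + g1 (u (N + 2)) / 2) := by gcongr; linarith

theorem mul_g2_le_g1 (hu : IsSolution g1 g2 (N + 2) h α u) (hhN : h * (N + 1) = 1)
    (hg1 : ∀ x > 0, 0 < g1 x) (hg1m : MonotoneOn g1 (Ioi 0)) :
    α * g2 (u (N + 2)) ≤ g1 (u (N + 2)) := by
  have hh : 0 < h := pos_of_mul_pos_left (hhN ▸ one_pos) (by positivity)
  have hup := hu.slopeSum_le hh.ne' hg1 hg1m le_rfl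
  have hmono := hu.g1_le_g1 hh.ne' hg1 hg1m (by omega) (Nat.le_succ _) le_rfl
  rw [hu.boundary_eq hh.ne']
  calc h * (slopeSum g1 u N + g1 (u (N + 2)) / 2) ≤ h * ((N + 1) * g1 (u (N + 2))) := by
        gcongr; nlinarith
    _ = g1 (u (N + 2)) := by rw [← mul_assoc, hhN, one_mul]

theorem half_g1_le_sub (hu : IsSolution g1 g2 (N + 2) h α u) (hhN : h * (N + 1) = 1)
    (hg1 : ∀ x > 0, 0 < g1 x) (hg1m : MonotoneOn g1 (Ioi 0)) :
    g1 (u 1) / 2 ≤ u (N + 2) - u 1 := by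
  have hh : 0 < h := pos_of_mul_pos_left (hhN ▸ one_pos) (by positivity)
  have key : ∀ K ≤ N + 1, h ^ 2 * K ^ 2 / 2 * g1 (u 1) ≤ u (K + 1) - u 1 := by
    intro K hK
    induction K with
    | zero => simp
    | succ K ih =>
      have hinc := hu.sub_eq_sq_mul_slopeSum (by omega : K ≤ N)
      have hlow := mul_le_mul_of_nonneg_left (hu.le_slopeSum hh.ne' hg1 hg1m (by omega : K ≤ N))
        (sq_nonneg h)
      have := ih (by omega)
      push_cast
      linarith
  have := key (N + 1) le_rfl
  have hsq : h ^ 2 * ((N : ℝ) + 1) ^ 2 = 1 := by rw [← mul_pow, hhN, one_pow]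
  push_cast at this
  rw [hsq] at this
  linarith

theorem two_mul_sum_trapezoid_eq (hu : IsSolution g1 g2 (N + 2) h α u) {K : ℕ} (hK : K ≤ N) :
    2 * ∑ i ∈ Finset.range (K + 1),
        (g1 (u (i + 1)) + g1 (u (i + 2))) / 2 * (u (i + 2) - u (i + 1))
      = h ^ 2 * ((g1 (u 1) / 2) ^ 2 + slopeSum g1 u K ^ 2 + slopeSum g1 u K * g1 (u (K + 2))) := by
  induction K with
  | zero =>
    rw [Finset.sum_range_one, hu.sub_eq_sq_mul_slopeSum (Nat.zero_le _), slopeSum_zero]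
    ring
  | succ K ih =>
    rw [Finset.sum_range_succ, mul_add, ih (by omega), hu.sub_eq_sq_mul_slopeSum hK,
      slopeSum_succ]
    ring

theorem two_mul_primG1_sub_le (hu : IsSolution g1 g2 (N + 2) h α u) (hh : h ≠ 0)
    (hg1 : ∀ x > 0, 0 < g1 x) (hg1m : MonotoneOn g1 (Ioi 0)) (hg1c : Continuous g1)
    (hg1cvx : ConvexOn ℝ (Ioi 0) g1) :
    2 * (primG1 g1 (u (N + 2)) - primG1 g1 (u 1)) ≤ (α * g2 (u (N + 2))) ^ 2 := by
  have hint : primG1 g1 (u (N + 2)) - primG1 g1 (u 1)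
      = ∑ i ∈ Finset.range (N + 1), ∫ t in u (i + 1)..u (i + 2), g1 t := by
    rw [primG1_sub_primG1 hg1c, sum_integral_adjacent_intervals (a := fun i => u (i + 1))
      fun k _ => hg1c.intervalIntegrable _ _]
  have htrap : primG1 g1 (u (N + 2)) - primG1 g1 (u 1) ≤ ∑ i ∈ Finset.range (N + 1),
      (g1 (u (i + 1)) + g1 (u (i + 2))) / 2 * (u (i + 2) - u (i + 1)) := by
    rw [hint]
    refine Finset.sum_le_sum fun i hi => ?_
    have hi : i ≤ N := by simp at hi; omega
    have hpos : 0 < u (i + 1) := hu.pos (by omega) (by omega)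
    have hlt : u (i + 1) < u (i + 2) :=
      hu.strictMonoOn hh hg1 ⟨by omega, by omega⟩ ⟨by omega, by omega⟩ (by omega)
    have hcvx : ConvexOn ℝ (Icc (u (i + 1)) (u (i + 2))) g1 :=
      hg1cvx.subset (fun t ht => hpos.trans_le ht.1) (convex_Icc _ _)
    exact hcvx.intervalIntegral_le_trapezoid (hg1c.intervalIntegrable _ _) hlt.le
  have hmono := hu.g1_le_g1 hh hg1 hg1m le_rfl (by omega : 1 ≤ N + 2) le_rfl
  have hg1a := hg1 _ (hu.pos le_rfl (by omega))
  have hsq : h ^ 2 * (g1 (u 1) / 2) ^ 2 ≤ h ^ 2 * (g1 (u (N + 2)) / 2) ^ 2 := by gcongr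
  rw [hu.boundary_eq hh, mul_pow]
  linarith [hu.two_mul_sum_trapezoid_eq (le_refl N)]

theorem le_mul_exp (hu : IsSolution g1 g2 (N + 2) h α u) (hhN : h * (N + 1) = 1)
    (hg1 : ∀ x > 0, 0 < g1 x) (hg1m : MonotoneOn g1 (Ioi 0)) {M : ℝ}
    (hM : ∀ x ∈ Ioc 0 (u (N + 2)), g1 x ≤ M * x) :
    u (N + 2) ≤ u 1 * Real.exp M := by
  have hh : 0 < h := pos_of_mul_pos_left (hhN ▸ one_pos) (by positivity)
  have hmono := (hu.strictMonoOn hh.ne' hg1).monotoneOn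
  have hM' : ∀ k, 1 ≤ k → k ≤ N + 2 → g1 (u k) ≤ M * u k := fun k hk1 hk2 =>
    hM _ ⟨hu.pos hk1 hk2, hmono ⟨hk1, hk2⟩ ⟨by omega, le_rfl⟩ hk2⟩
  have hu1 := hu.pos le_rfl (by omega : 1 ≤ N + 2)
  have hM0 : 0 ≤ M :=
    (pos_of_mul_pos_left ((hg1 _ hu1).trans_le (hM' 1 le_rfl (by omega))) hu1.le).le
  have hstep : ∀ K ≤ N, u (K + 2) ≤ (1 + h * M) * u (K + 1) := by
    intro K hK
    have hpos := hu.pos (by omega : 1 ≤ K + 1) (by omega)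
    have hKN : (K : ℝ) + 1 / 2 ≤ N + 1 := by
      have : (K : ℝ) ≤ N := by exact_mod_cast hK
      linarith
    have hhK : h * (K + 1 / 2) ≤ 1 := (mul_le_mul_of_nonneg_left hKN hh.le).trans hhN.le
    have hc : slopeSum g1 u K ≤ (K + 1 / 2) * (M * u (K + 1)) :=
      (hu.slopeSum_le hh.ne' hg1 hg1m hK).trans (by gcongr; exact hM' _ (by omega) (by omega))
    have : h ^ 2 * slopeSum g1 u K ≤ h * M * u (K + 1) :=
      calc h ^ 2 * slopeSum g1 u K ≤ h ^ 2 * ((K + 1 / 2) * (M * u (K + 1))) := by gcongr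
        _ = (h * (K + 1 / 2)) * (h * M * u (K + 1)) := by ring
        _ ≤ h * M * u (K + 1) := mul_le_of_le_one_left (by positivity) hhK
    linarith [hu.sub_eq_sq_mul_slopeSum hK]
  have hpow : ∀ K ≤ N + 1, u (K + 1) ≤ (1 + h * M) ^ K * u 1 := by
    intro K hK
    induction K with
    | zero => simp
    | succ K ih =>
      calc u (K + 2) ≤ (1 + h * M) * u (K + 1) := hstep K (by omega)
        _ ≤ (1 + h * M) * ((1 + h * M) ^ K * u 1) := by gcongr; exact ih (by omega)
        _ = (1 + h * M) ^ (K + 1) * u 1 := by ring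
  have hexp : (1 + h * M) ^ (N + 1) ≤ Real.exp M := by
    calc (1 + h * M) ^ (N + 1) ≤ Real.exp (h * M) ^ (N + 1) := by
          gcongr; linarith [Real.add_one_le_exp (h * M)]
      _ = Real.exp M := by
          rw [← Real.exp_nat_mul]; congr 1; push_cast; linear_combination M * hhN
  calc u (N + 2) ≤ (1 + h * M) ^ (N + 1) * u 1 := hpow (N + 1) le_rfl
    _ ≤ u 1 * Real.exp M := by rw [mul_comm]; gcongr

theorem two_mul_GG_sub_le (hu : IsSolution g1 g2 (N + 2) h α u) (hh : h ≠ 0)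
    (hg1 : ∀ x > 0, 0 < g1 x) (hg1m : MonotoneOn g1 (Ioi 0)) (hg1c : Continuous g1)
    (hg1cvx : ConvexOn ℝ (Ioi 0) g1) (hg2 : ∀ x > 0, 0 < g2 x) (hg2m : MonotoneOn g2 (Ioi 0)) :
    2 * (GG g1 g2 (u (N + 2)) - GG g1 g2 (u 1)) ≤ α ^ 2 := by
  have ha := hu.pos le_rfl (by omega : 1 ≤ N + 2)
  have hb := hu.pos (by omega : 1 ≤ N + 2) le_rfl
  have hg2ab : g2 (u 1) ≤ g2 (u (N + 2)) := hg2m ha hb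
    ((hu.strictMonoOn hh hg1).monotoneOn ⟨le_rfl, by omega⟩ ⟨by omega, le_rfl⟩ (by omega))
  have hE := hu.two_mul_primG1_sub_le hh hg1 hg1m hg1c hg1cvx
  have : primG1 g1 (u 1) / g2 (u (N + 2)) ^ 2 ≤ GG g1 g2 (u 1) := by
    unfold GG; gcongr; exacts [(primG1_pos hg1c hg1 ha).le, pow_pos (hg2 _ ha) 2, (hg2 _ ha).le]
  have : 2 * (GG g1 g2 (u (N + 2)) - primG1 g1 (u 1) / g2 (u (N + 2)) ^ 2) ≤ α ^ 2 := by
    rw [GG, ← sub_div, mul_div_assoc', div_le_iff₀ (pow_pos (hg2 _ hb) 2)]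
    linarith
  linarith

end IsSolution

end Discrete

/-- The consequences of the standing hypotheses that the continuum estimates use. -/
structure StandingHyp (g1 g2 : ℝ → ℝ) (d : ℝ) : Prop where
  g1_zero : g1 0 = 0
  g2_zero : g2 0 = 0
  g1_differentiable : Differentiable ℝ g1
  g2_differentiable : Differentiable ℝ g2
  g1_strictMonoOn : StrictMonoOn g1 (Ici 0)
  g2_strictMonoOn : StrictMonoOn g2 (Ici 0)
  deriv_g2_pos : ∀ x > 0, 0 < deriv g2 x
  g1_convexOn : ConvexOn ℝ (Ici 0) g1
  g2_convexOn : ConvexOn ℝ (Ici 0) g2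
  GG_convexOn : ConvexOn ℝ (Ioi 0) (GG g1 g2)
  deriv_GG_ge : ∀ x > 0, (1 - d) * g1 x / g2 x ^ 2 ≤ deriv (GG g1 g2) x
  d_lt_one : d < 1

namespace StandingHyp

variable {g1 g2 ginv Ginv : ℝ → ℝ} {d : ℝ}

theorem of_contDiff (hg1C : ContDiff ℝ 2 g1) (hg2C : ContDiff ℝ 2 g2)
    (hg10 : g1 0 = 0) (hg20 : g2 0 = 0)
    (hg1d : ∀ x > 0, 0 < deriv g1 x) (hg2d : ∀ x > 0, 0 < deriv g2 x)
    (hg1dd : ∀ x > 0, 0 ≤ deriv (deriv g1) x) (hg2dd : ∀ x > 0, 0 ≤ deriv (deriv g2) x)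
    (hd1 : d < 1) (hH2 : ∀ x > 0, 0 ≤ d * g1 x / primG1 g1 x - 2 * deriv g2 x / g2 x)
    (hH3 : ∀ x > 0, 0 ≤ deriv (deriv (GG g1 g2)) x) : StandingHyp g1 g2 d := by
  have hg1m := strictMonoOn_Ici_of_deriv_pos hg1C.continuous hg1d
  have hg2m := strictMonoOn_Ici_of_deriv_pos hg2C.continuous hg2d
  have hg1 : ∀ x > 0, 0 < g1 x := fun x hx => hg10 ▸ hg1m self_mem_Ici hx.le hx
  have hg2 : ∀ x > 0, 0 < g2 x := fun x hx => hg20 ▸ hg2m self_mem_Ici hx.le hx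
  refine ⟨hg10, hg20, hg1C.differentiable (by norm_num), hg2C.differentiable (by norm_num),
    hg1m, hg2m, hg2d, convexOn_Ici_of_deriv2_nonneg hg1C hg1dd,
    convexOn_Ici_of_deriv2_nonneg hg2C hg2dd, convexOn_GG (hg1C.of_le (by norm_num)) hg2C hg2 hH3,
    fun x hx => ?_, hd1⟩
  exact one_sub_mul_div_sq_le_deriv_GG hg1C.continuous (hg2C.differentiable (by norm_num) x)
    (hg2 x hx) (primG1_pos hg1C.continuous hg1 hx) (hH2 x hx)

theorem g1_pos (hS : StandingHyp g1 g2 d) {x : ℝ} (hx : 0 < x) : 0 < g1 x :=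
  hS.g1_zero ▸ hS.g1_strictMonoOn self_mem_Ici hx.le hx

theorem g2_pos (hS : StandingHyp g1 g2 d) {x : ℝ} (hx : 0 < x) : 0 < g2 x :=
  hS.g2_zero ▸ hS.g2_strictMonoOn self_mem_Ici hx.le hx

theorem GG_pos (hS : StandingHyp g1 g2 d) {x : ℝ} (hx : 0 < x) : 0 < GG g1 g2 x :=
  div_pos (primG1_pos hS.g1_differentiable.continuous (fun _ => hS.g1_pos) hx)
    (pow_pos (hS.g2_pos hx) 2)

theorem differentiableAt_GG (hS : StandingHyp g1 g2 d) {x : ℝ} (hx : 0 < x) :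
    DifferentiableAt ℝ (GG g1 g2) x :=
  (hasDerivAt_GG hS.g1_differentiable.continuous (hS.g2_differentiable x)
    (hS.g2_pos hx).ne').differentiableAt

theorem deriv_GG_pos (hS : StandingHyp g1 g2 d) {x : ℝ} (hx : 0 < x) :
    0 < deriv (GG g1 g2) x :=
  lt_of_lt_of_le (div_pos (mul_pos (sub_pos.2 hS.d_lt_one) (hS.g1_pos hx))
    (pow_pos (hS.g2_pos hx) 2)) (hS.deriv_GG_ge x hx)

variable {a b α : ℝ}

theorem le_Ginv (hS : StandingHyp g1 g2 d) (hgmono : StrictMonoOn (gg g1 g2) (Ioi 0))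
    (hGmono : StrictMonoOn (GG g1 g2) (Ioi 0))
    (hginv : ∀ y ∈ Ioi (0:ℝ), ginv y ∈ Ioi 0 ∧ gg g1 g2 (ginv y) = y)
    (hGinv : ∀ y ∈ Ioi (0:ℝ), Ginv y ∈ Ioi 0 ∧ GG g1 g2 (Ginv y) = y) (hα : 0 < α)
    (ha : 0 < a) (hab : a ≤ b) (hgap : g1 a / 2 ≤ b - a)
    (hGGab : 2 * (GG g1 g2 b - GG g1 g2 a) ≤ α ^ 2) :
    b ≤ Ginv (GG g1 g2 (ginv (α / Real.sqrt (1 - d))) + α ^ 2 / 2) := by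
  obtain ⟨hP, hgP⟩ := hginv _ (div_pos hα (Real.sqrt_pos.2 (sub_pos.2 hS.d_lt_one)))
  have haP : a ≤ ginv (α / Real.sqrt (1 - d)) :=
    (hgmono.le_iff_apply_le_of_apply_eq ha hP hgP).2 <| gg_le_div_sqrt hS.GG_convexOn
      (hS.differentiableAt_GG ha) (hS.deriv_GG_ge a ha) ha hab (hS.g1_pos ha) (hS.g2_pos ha)
      hS.d_lt_one hα.le hgap hGGab
  obtain ⟨hC, hGC⟩ := hGinv (GG g1 g2 (ginv (α / Real.sqrt (1 - d))) + α ^ 2 / 2)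
    (add_pos (hS.GG_pos hP) (by positivity))
  exact (hGmono.le_iff_apply_le_of_apply_eq (ha.trans_le hab) hC hGC).2
    (by linarith [hGmono.monotoneOn ha hP haP])

theorem lt_ginv_and_lt_Ginv (hS : StandingHyp g1 g2 d)
    (hgmono : StrictMonoOn (gg g1 g2) (Ioi 0)) (hGmono : StrictMonoOn (GG g1 g2) (Ioi 0))
    (hginv : ∀ y ∈ Ioi (0:ℝ), ginv y ∈ Ioi 0 ∧ gg g1 g2 (ginv y) = y)
    (hGinv : ∀ y ∈ Ioi (0:ℝ), Ginv y ∈ Ioi 0 ∧ GG g1 g2 (Ginv y) = y) (hα : 0 < α)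
    (ha : 0 < a) (hab : a < b) (hflux_lo : g1 a < α * g2 b) (hflux_hi : α * g2 b ≤ g1 b)
    (hgap : g1 a / 2 ≤ b - a) (hGGab : 2 * (GG g1 g2 b - GG g1 g2 a) ≤ α ^ 2)
    (hgron : ∀ M, (∀ x ∈ Ioc 0 b, g1 x ≤ M * x) → b ≤ a * Real.exp M) :
    ∀ C1 M Chat : ℝ,
      C1 = Ginv (GG g1 g2 (ginv (α / Real.sqrt (1 - d))) + α ^ 2 / 2) →
      M = deriv g1 C1 →
      Chat = 1 + deriv g2 C1 * α ^ 2 /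
          (2 * g2 (ginv α / Real.exp M) * deriv (GG g1 g2) (ginv α / Real.exp M)) →
      a < ginv (α * Chat) ∧ b < Ginv (GG g1 g2 (ginv (α * Chat)) + α ^ 2 / 2) := by
  intro C1 M Chat hC1 hM hChat
  have hb : 0 < b := ha.trans hab
  have hbC1 : b ≤ C1 := hC1 ▸ hS.le_Ginv hgmono hGmono hginv hGinv hα ha hab.le hgap hGGab
  have hbexp : b ≤ a * Real.exp M := hgron M fun x hx => hM ▸
    hS.g1_convexOn.le_deriv_mul hS.g1_differentiable hS.g1_zero hx.1.le (hx.2.trans hbC1)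
  obtain ⟨hP, hgP⟩ := hginv α hα
  have hPb : ginv α ≤ b := (hgmono.le_iff_le hP hb).1 <| by
    rw [hgP, gg, le_div_iff₀ (hS.g2_pos hb)]; exact hflux_hi
  have hm : 0 < ginv α / Real.exp M := div_pos hP (Real.exp_pos M)
  have hma : ginv α / Real.exp M ≤ a := by rw [div_le_iff₀ (Real.exp_pos M)]; linarith
  have hratio : g2 b / g2 a ≤ Chat := hChat ▸ g2_div_g2_le hS.g2_convexOn hS.g2_differentiable
    hS.GG_convexOn (fun x hx => hS.differentiableAt_GG hx) hm hma hab.le hbC1 (hS.g2_pos hm)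
    (hS.g2_strictMonoOn.monotoneOn hm.le ha.le hma) (hS.deriv_g2_pos C1 (hb.trans_le hbC1)).le
    (hS.deriv_GG_pos hm) hGGab
  have hgga : gg g1 g2 a < α * Chat :=
    calc gg g1 g2 a < α * g2 b / g2 a := div_lt_div_of_pos_right hflux_lo (hS.g2_pos ha)
      _ ≤ α * Chat := by rw [mul_div_assoc]; gcongr
  obtain ⟨hY, hgY⟩ := hginv (α * Chat) (hgga.trans' (div_pos (hS.g1_pos ha) (hS.g2_pos ha)))
  have haY : a < ginv (α * Chat) := (hgmono.lt_iff_apply_lt_of_apply_eq ha hY hgY).2 hgga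
  obtain ⟨hZ, hGZ⟩ := hGinv (GG g1 g2 (ginv (α * Chat)) + α ^ 2 / 2)
    (add_pos (hS.GG_pos hY) (by positivity))
  exact ⟨haY, (hGmono.lt_iff_apply_lt_of_apply_eq hb hZ hGZ).2 (by linarith [hGmono ha hY haY])⟩

end StandingHyp

theorem stmt_11_general (n : ℕ) (hn : 2 ≤ n) (h : ℝ) (hh : h = 1 / ((n : ℝ) - 1))
    (g1 g2 : ℝ → ℝ)
    (hg1C : ContDiff ℝ 3 g1) (hg2C : ContDiff ℝ 3 g2)
    (hg10 : g1 0 = 0) (hg20 : g2 0 = 0)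
    (hg1d : ∀ x > (0:ℝ), 0 < deriv g1 x) (hg2d : ∀ x > (0:ℝ), 0 < deriv g2 x)
    (hg1dd : ∀ x > (0:ℝ), 0 < deriv (deriv g1) x)
    (hg2dd : ∀ x > (0:ℝ), 0 < deriv (deriv g2) x)
    (α : ℝ) (hα : 0 < α) (u : ℕ → ℝ) (hu : IsSolution g1 g2 n h α u)
    (hgmono : StrictMonoOn (gg g1 g2) (Set.Ioi 0))
    (hGmono : StrictMonoOn (GG g1 g2) (Set.Ioi 0))
    (ginv Ginv : ℝ → ℝ)
    (hginv : ∀ y ∈ Set.Ioi (0:ℝ), ginv y ∈ Set.Ioi 0 ∧ gg g1 g2 (ginv y) = y)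
    (hGinv : ∀ y ∈ Set.Ioi (0:ℝ), Ginv y ∈ Set.Ioi 0 ∧ GG g1 g2 (Ginv y) = y)
    (d : ℝ) (hd1 : d < 1)
    (hH2 : ∀ x > (0:ℝ), 0 ≤ d * g1 x / primG1 g1 x - 2 * deriv g2 x / g2 x)
    (hH3 : ∀ x > (0:ℝ), 0 ≤ deriv (deriv (GG g1 g2)) x) :
    ∀ C1 M Chat : ℝ,
      C1 = Ginv (GG g1 g2 (ginv (α / Real.sqrt (1 - d))) + α ^ 2 / 2) →
      M = deriv g1 C1 →
      Chat = 1 + deriv g2 C1 * α ^ 2 /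
          (2 * g2 (ginv α / Real.exp M) * deriv (GG g1 g2) (ginv α / Real.exp M)) →
      u 1 < ginv (α * Chat) ∧
      u n < Ginv (GG g1 g2 (ginv (α * Chat)) + α ^ 2 / 2) := by
  obtain ⟨N, rfl⟩ : ∃ N, n = N + 2 := ⟨n - 2, by omega⟩
  have hhN : h * (N + 1) = 1 := by
    rw [hh, Nat.cast_add, Nat.cast_two, add_sub_assoc, show (2 : ℝ) - 1 = 1 by norm_num,
      one_div, inv_mul_cancel₀ (by positivity)]
  have hh0 : h ≠ 0 := by rintro rfl; simp at hhN
  have hS : StandingHyp g1 g2 d := .of_contDiff (hg1C.of_le (by norm_num))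
    (hg2C.of_le (by norm_num)) hg10 hg20 hg1d hg2d (fun x hx => (hg1dd x hx).le)
    (fun x hx => (hg2dd x hx).le) hd1 hH2 hH3
  have hg1 : ∀ x > 0, 0 < g1 x := fun _ => hS.g1_pos
  have hg1m : StrictMonoOn g1 (Ioi 0) := hS.g1_strictMonoOn.mono Ioi_subset_Ici_self
  have ha : 0 < u 1 := hu.pos le_rfl (by omega)
  refine hS.lt_ginv_and_lt_Ginv hgmono hGmono hginv hGinv hα ha
    (hu.strictMonoOn hh0 hg1 ⟨le_rfl, by omega⟩ ⟨by omega, le_rfl⟩ (by omega))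
    (hu.g1_lt_mul_g2 hhN hg1 hg1m) (hu.mul_g2_le_g1 hhN hg1 hg1m.monotoneOn)
    (hu.half_g1_le_sub hhN hg1 hg1m.monotoneOn) ?_ fun M => hu.le_mul_exp hhN hg1 hg1m.monotoneOn
  exact hu.two_mul_GG_sub_le hh0 hg1 hg1m.monotoneOn hS.g1_differentiable.continuous
    (hS.g1_convexOn.subset Ioi_subset_Ici_self (convex_Ioi 0)) (fun _ => hS.g2_pos)
    (hS.g2_strictMonoOn.monotoneOn.mono Ioi_subset_Ici_self)

theorem stmt_11 (n : ℕ) (hn : 2 ≤ n) (h : ℝ) (hh : h = 1 / ((n : ℝ) - 1))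
    (g1 g2 : ℝ → ℝ)
    (hg1C : ContDiff ℝ 3 g1) (hg2C : ContDiff ℝ 3 g2)
    (hg10 : g1 0 = 0) (hg20 : g2 0 = 0)
    (hg1d : ∀ x > (0:ℝ), 0 < deriv g1 x) (hg2d : ∀ x > (0:ℝ), 0 < deriv g2 x)
    (hg1dd : ∀ x > (0:ℝ), 0 < deriv (deriv g1) x)
    (hg2dd : ∀ x > (0:ℝ), 0 < deriv (deriv g2) x)
    (hg1ddd : ∀ x > (0:ℝ), 0 ≤ deriv (deriv (deriv g1)) x)
    (hg2ddd : ∀ x > (0:ℝ), 0 ≤ deriv (deriv (deriv g2)) x)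
    (α : ℝ) (hα : 0 < α) (u : ℕ → ℝ) (hu : IsSolution g1 g2 n h α u)
    (hgmono : StrictMonoOn (gg g1 g2) (Set.Ioi 0))
    (hgbij : Set.BijOn (gg g1 g2) (Set.Ioi 0) (Set.Ioi 0))
    (hGmono : StrictMonoOn (GG g1 g2) (Set.Ioi 0))
    (hGbij : Set.BijOn (GG g1 g2) (Set.Ioi 0) (Set.Ioi 0))
    (ginv Ginv : ℝ → ℝ)
    (hginv : ∀ y ∈ Set.Ioi (0:ℝ), ginv y ∈ Set.Ioi 0 ∧ gg g1 g2 (ginv y) = y)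
    (hGinv : ∀ y ∈ Set.Ioi (0:ℝ), Ginv y ∈ Set.Ioi 0 ∧ GG g1 g2 (Ginv y) = y)
    (d : ℝ) (hd0 : 0 ≤ d) (hd1 : d < 1)
    (hH2 : ∀ x > (0:ℝ), 0 ≤ d * g1 x / primG1 g1 x - 2 * deriv g2 x / g2 x)
    (hH3 : ∀ x > (0:ℝ), 0 ≤ deriv (deriv (GG g1 g2)) x) :
    ∀ C1 M Chat : ℝ,
      C1 = Ginv (GG g1 g2 (ginv (α / Real.sqrt (1 - d))) + α ^ 2 / 2) →
      M = deriv g1 C1 →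
      Chat = 1 + deriv g2 C1 * α ^ 2 /
          (2 * g2 (ginv α / Real.exp M) * deriv (GG g1 g2) (ginv α / Real.exp M)) →
      u 1 < ginv (α * Chat) ∧
      u n < Ginv (GG g1 g2 (ginv (α * Chat)) + α ^ 2 / 2) :=
  stmt_11_general n hn h hh g1 g2 hg1C hg2C hg10 hg20 hg1d hg2d hg1dd hg2dd α hα u hu hgmono hGmono
    ginv Ginv hginv hGinv d hd1 hH2 hH3
end
end

section
/- Fix α > 0 and an integer n ≥ 2. If the function g := g₁/g₂ is a surjection of (0,∞) onto (0,∞), then the discrete system (Sα) has a positive solution; equivalently, there exists u₁ > 0 with A(u₁) = α. -/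
noncomputable section

/-!
The functions `U_k` are continuous, vanish at `0`, and for `u₁ > 0` form a positive nondecreasing
sequence in `k`. Summing the recursion gives `U_n - U_{n-1} ≤ h² (n - 3/2) g₁(U_n)`, which traps
`A(u₁)` between `(h/2) g(U_n(u₁))` and `g(U_n(u₁))`. Since `U_n` maps `(0,∞)` onto `(0,∞)` and `g`
does too, `A` takes a value `≤ α` and a value `≥ α`, and the intermediate value theorem applies.
-/

open Set

namespace Useq

variable {g1 : ℝ → ℝ} {h : ℝ}

theorem continuous (hc : Continuous g1) : ∀ k, Continuous (Useq g1 h k)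
  | 0 => continuous_id
  | 1 => by simp only [Useq]; fun_prop
  | k + 2 => by
    have := continuous hc k
    have := continuous hc (k + 1)
    simp only [Useq]; fun_prop

theorem apply_zero (hg10 : g1 0 = 0) : ∀ k, Useq g1 h k 0 = 0
  | 0 => rfl
  | 1 => by simp [Useq, hg10]
  | k + 2 => by simp [Useq, apply_zero hg10 k, apply_zero hg10 (k + 1), hg10]

theorem sub_succ_succ (k : ℕ) (x : ℝ) :
    Useq g1 h (k + 2) x - Useq g1 h (k + 1) x =
      Useq g1 h (k + 1) x - Useq g1 h k x + h ^ 2 * g1 (Useq g1 h (k + 1) x) := by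
  simp only [Useq]; ring

theorem pos_and_le_succ (hg1 : ∀ x > (0:ℝ), 0 < g1 x) {x : ℝ} (hx : 0 < x) (k : ℕ) :
    0 < Useq g1 h k x ∧ Useq g1 h k x ≤ Useq g1 h (k + 1) x := by
  induction k with
  | zero =>
    have := hg1 x hx
    refine ⟨hx, ?_⟩
    simp only [Useq]
    nlinarith [sq_nonneg h]
  | succ k ih =>
    have hpos : 0 < Useq g1 h (k + 1) x := ih.1.trans_le ih.2
    have := hg1 _ hpos
    refine ⟨hpos, ?_⟩
    nlinarith [sub_succ_succ (g1 := g1) (h := h) k x, sq_nonneg h, ih.2]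

theorem pos (hg1 : ∀ x > (0:ℝ), 0 < g1 x) {x : ℝ} (hx : 0 < x) (k : ℕ) : 0 < Useq g1 h k x :=
  (pos_and_le_succ hg1 hx k).1

theorem monotone (hg1 : ∀ x > (0:ℝ), 0 < g1 x) {x : ℝ} (hx : 0 < x) :
    Monotone fun k ↦ Useq g1 h k x :=
  monotone_nat_of_le_succ fun k ↦ (pos_and_le_succ hg1 hx k).2

/-- `U_{k+1} - U_k = h² (g₁(U_0)/2 + Σ_{0<j≤k} g₁(U_j))`, and `g₁ ∘ U_j` is nondecreasing in `j`. -/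
theorem sub_le (hg1 : ∀ x > (0:ℝ), 0 < g1 x) {x : ℝ} (hx : 0 < x)
    (hmono : MonotoneOn g1 (Ici 0)) (k : ℕ) :
    Useq g1 h (k + 1) x - Useq g1 h k x ≤ h ^ 2 * (k + 1 / 2) * g1 (Useq g1 h (k + 1) x) := by
  have hg1_le : ∀ j, g1 (Useq g1 h j x) ≤ g1 (Useq g1 h (j + 1) x) := fun j ↦
    hmono (pos hg1 hx j).le (pos hg1 hx (j + 1)).le (pos_and_le_succ hg1 hx j).2
  induction k with
  | zero =>
    have := hg1_le 0
    simp only [Useq, Nat.cast_zero] at this ⊢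
    nlinarith [sq_nonneg h]
  | succ k ih =>
    have := hg1_le (k + 1)
    rw [sub_succ_succ]
    push_cast
    have hcoef : (0:ℝ) ≤ h ^ 2 * (k + 1 / 2) := by positivity
    nlinarith [sq_nonneg h, mul_le_mul_of_nonneg_left this hcoef]

theorem surjOn (hc : Continuous g1) (hg10 : g1 0 = 0) (hg1 : ∀ x > (0:ℝ), 0 < g1 x)
    (k : ℕ) : SurjOn (Useq g1 h k) (Ioi 0) (Ioi 0) := by
  intro v (hv : 0 < v)
  have hv_le : v ≤ Useq g1 h k v := monotone hg1 hv (Nat.zero_le k)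
  obtain ⟨x, hx, hxv⟩ := intermediate_value_Icc hv.le (continuous hc k).continuousOn
    (show v ∈ Icc (Useq g1 h k 0) (Useq g1 h k v) by rw [apply_zero hg10]; exact ⟨hv.le, hv_le⟩)
  refine ⟨x, lt_of_le_of_ne hx.1 ?_, hxv⟩
  rintro rfl
  rw [apply_zero hg10] at hxv
  exact hv.ne hxv

end Useq

theorem strictMonoOn_Ici_of_deriv_pos_s12 {g : ℝ → ℝ} (hc : Continuous g)
    (hd : ∀ x > (0:ℝ), 0 < deriv g x) : StrictMonoOn g (Ici 0) :=
  strictMonoOn_of_deriv_pos (convex_Ici 0) hc.continuousOn (by simpa only [interior_Ici])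

theorem pos_of_deriv_pos {g : ℝ → ℝ} (hc : Continuous g) (h0 : g 0 = 0)
    (hd : ∀ x > (0:ℝ), 0 < deriv g x) (x : ℝ) (hx : 0 < x) : 0 < g x :=
  h0 ▸ strictMonoOn_Ici_of_deriv_pos_s12 hc hd (mem_Ici.2 le_rfl) hx.le hx

section discA

variable {g1 g2 : ℝ → ℝ} {h : ℝ} {m : ℕ} {x : ℝ}

theorem discA_add_two (m : ℕ) (x : ℝ) :
    discA g1 g2 h (m + 2) x =
      ((Useq g1 h (m + 1) x - Useq g1 h m x) / h + h / 2 * g1 (Useq g1 h (m + 1) x)) /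
        g2 (Useq g1 h (m + 1) x) :=
  rfl

theorem half_mul_gg_le_discA (hh : 0 < h) (hg1 : ∀ x > (0:ℝ), 0 < g1 x)
    (hg2 : ∀ x > (0:ℝ), 0 < g2 x) (hx : 0 < x) :
    h / 2 * gg g1 g2 (Useq g1 h (m + 1) x) ≤ discA g1 g2 h (m + 2) x := by
  have hdiff : 0 ≤ (Useq g1 h (m + 1) x - Useq g1 h m x) / h :=
    div_nonneg (sub_nonneg.2 (Useq.pos_and_le_succ hg1 hx m).2) hh.le
  rw [discA_add_two, gg, mul_div_assoc']
  gcongr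
  · exact (hg2 _ (Useq.pos hg1 hx _)).le
  · linarith

theorem discA_le_gg (hh : 0 < h) (hm : h * (m + 1) = 1) (hmono : MonotoneOn g1 (Ici 0))
    (hg1 : ∀ x > (0:ℝ), 0 < g1 x) (hg2 : ∀ x > (0:ℝ), 0 < g2 x) (hx : 0 < x) :
    discA g1 g2 h (m + 2) x ≤ gg g1 g2 (Useq g1 h (m + 1) x) := by
  set V := Useq g1 h (m + 1) x
  have hdiff : (V - Useq g1 h m x) / h ≤ h * (m + 1 / 2) * g1 V := by
    rw [div_le_iff₀ hh]
    linarith [Useq.sub_le (h := h) hg1 hx hmono m]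
  rw [discA_add_two, gg]
  gcongr
  · exact (hg2 _ (Useq.pos hg1 hx _)).le
  · calc (V - Useq g1 h m x) / h + h / 2 * g1 V ≤ h * (m + 1 / 2) * g1 V + h / 2 * g1 V := by
          linarith
      _ = h * (m + 1) * g1 V := by ring
      _ = g1 V := by rw [hm, one_mul]

theorem continuousOn_discA (hc1 : Continuous g1) (hc2 : Continuous g2)
    (hg1 : ∀ x > (0:ℝ), 0 < g1 x) (hg2 : ∀ x > (0:ℝ), 0 < g2 x) :
    ContinuousOn (discA g1 g2 h (m + 2)) (Ioi 0) := by
  have := Useq.continuous (h := h) hc1 (m + 1)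
  have := Useq.continuous (h := h) hc1 m
  simp_rw [funext (discA_add_two (g1 := g1) (g2 := g2) (h := h) m)]
  exact ContinuousOn.div (by fun_prop) (by fun_prop) fun x hx ↦ (hg2 _ (Useq.pos hg1 hx _)).ne'

/-- Points where `g(U_n)` equals `α` and `2α/h` give values of `A` below and above `α`. -/
theorem exists_discA_eq (hh : 0 < h) (hm : h * (m + 1) = 1) (hc1 : Continuous g1)
    (hc2 : Continuous g2) (hg10 : g1 0 = 0) (hmono : MonotoneOn g1 (Ici 0))
    (hg1 : ∀ x > (0:ℝ), 0 < g1 x) (hg2 : ∀ x > (0:ℝ), 0 < g2 x)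
    (hsurj : SurjOn (gg g1 g2) (Ioi 0) (Ioi 0)) {α : ℝ} (hα : 0 < α) :
    ∃ x > 0, discA g1 g2 h (m + 2) x = α := by
  have hsurj' := hsurj.comp (Useq.surjOn (h := h) hc1 hg10 hg1 (m + 1))
  obtain ⟨a, ha, hga⟩ := hsurj' (mem_Ioi.2 hα)
  obtain ⟨b, hb, hgb⟩ := hsurj' (mem_Ioi.2 (by positivity : 0 < 2 * α / h))
  have hAa : discA g1 g2 h (m + 2) a ≤ α :=
    (discA_le_gg hh hm hmono hg1 hg2 ha).trans_eq hga
  have hAb : α ≤ discA g1 g2 h (m + 2) b :=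
    calc α = h / 2 * (2 * α / h) := by field_simp
      _ = h / 2 * gg g1 g2 (Useq g1 h (m + 1) b) := by rw [← hgb]; rfl
      _ ≤ _ := half_mul_gg_le_discA hh hg1 hg2 hb
  exact isPreconnected_Ioi.intermediate_value ha hb (continuousOn_discA hc1 hc2 hg1 hg2)
    ⟨hAa, hAb⟩

theorem isSolution_Useq {α : ℝ} (hh : h ≠ 0) (hg1 : ∀ x > (0:ℝ), 0 < g1 x)
    (hg2 : ∀ x > (0:ℝ), 0 < g2 x) (hx : 0 < x) (hA : discA g1 g2 h (m + 2) x = α) :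
    IsSolution g1 g2 (m + 2) h α fun k ↦ Useq g1 h (k - 1) x := by
  refine ⟨fun k _ _ ↦ Useq.pos hg1 hx _, by simp [Useq], ?_, ?_⟩
  · rintro k hk -
    obtain ⟨j, rfl⟩ := Nat.exists_eq_add_of_le' hk
    show Useq g1 h (j + 2) x - 2 * Useq g1 h (j + 1) x + Useq g1 h j x =
      h ^ 2 * g1 (Useq g1 h (j + 1) x)
    linarith [Useq.sub_succ_succ (g1 := g1) (h := h) j x]
  · show Useq g1 h (m + 1) x - Useq g1 h m x =
      -(h ^ 2 / 2) * g1 (Useq g1 h (m + 1) x) + h * α * g2 (Useq g1 h (m + 1) x)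
    have hg2_ne := (hg2 _ (Useq.pos (h := h) hg1 hx (m + 1))).ne'
    rw [← hA, discA_add_two]
    field_simp
    ring

end discA

theorem stmt_12_general (n : ℕ) (hn : 2 ≤ n) (h : ℝ) (hh : h = 1 / ((n : ℝ) - 1))
    (g1 g2 : ℝ → ℝ)
    (hg1C : ContDiff ℝ 3 g1) (hg2C : ContDiff ℝ 3 g2)
    (hg10 : g1 0 = 0) (hg20 : g2 0 = 0)
    (hg1d : ∀ x > (0:ℝ), 0 < deriv g1 x) (hg2d : ∀ x > (0:ℝ), 0 < deriv g2 x)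
    (α : ℝ) (hα : 0 < α)
    (hgsurj : Set.SurjOn (gg g1 g2) (Set.Ioi 0) (Set.Ioi 0)) :
    (∃ u : ℕ → ℝ, IsSolution g1 g2 n h α u) ∧
    ∃ u1 > (0:ℝ), discA g1 g2 h n u1 = α := by
  obtain ⟨m, rfl⟩ : ∃ m, n = m + 2 := ⟨n - 2, by omega⟩
  have hcast : ((m + 2 : ℕ) : ℝ) - 1 = m + 1 := by push_cast; ring
  have hh0 : 0 < h := by rw [hh, hcast]; positivity
  have hm : h * (m + 1) = 1 := by rw [hh, hcast]; field_simp
  have hg1 := pos_of_deriv_pos hg1C.continuous hg10 hg1d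
  have hg2 := pos_of_deriv_pos hg2C.continuous hg20 hg2d
  have hmono := (strictMonoOn_Ici_of_deriv_pos_s12 hg1C.continuous hg1d).monotoneOn
  obtain ⟨x, hx, hA⟩ :=
    exists_discA_eq hh0 hm hg1C.continuous hg2C.continuous hg10 hmono hg1 hg2 hgsurj hα
  exact ⟨⟨_, isSolution_Useq hh0.ne' hg1 hg2 hx hA⟩, x, hx, hA⟩

theorem stmt_12 (n : ℕ) (hn : 2 ≤ n) (h : ℝ) (hh : h = 1 / ((n : ℝ) - 1))
    (g1 g2 : ℝ → ℝ)
    (hg1C : ContDiff ℝ 3 g1) (hg2C : ContDiff ℝ 3 g2)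
    (hg10 : g1 0 = 0) (hg20 : g2 0 = 0)
    (hg1d : ∀ x > (0:ℝ), 0 < deriv g1 x) (hg2d : ∀ x > (0:ℝ), 0 < deriv g2 x)
    (hg1dd : ∀ x > (0:ℝ), 0 < deriv (deriv g1) x)
    (hg2dd : ∀ x > (0:ℝ), 0 < deriv (deriv g2) x)
    (hg1ddd : ∀ x > (0:ℝ), 0 ≤ deriv (deriv (deriv g1)) x)
    (hg2ddd : ∀ x > (0:ℝ), 0 ≤ deriv (deriv (deriv g2)) x)
    (α : ℝ) (hα : 0 < α)
    (hgsurj : Set.SurjOn (gg g1 g2) (Set.Ioi 0) (Set.Ioi 0)) :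
    (∃ u : ℕ → ℝ, IsSolution g1 g2 n h α u) ∧
    ∃ u1 > (0:ℝ), discA g1 g2 h n u1 = α :=
  stmt_12_general n hn h hh g1 g2 hg1C hg2C hg10 hg20 hg1d hg2d α hα hgsurj
end
end

section
/- Let α > 0 and let (u₁,…,u_n) ∈ (0,∞)ⁿ be a positive solution of the discrete system (Sα), so that u_k = U_k(u₁) for all k and α = A(u₁). Then: (i) h·g₂(U_n(u₁))·A′(u₁) = det J(α,u); and (ii) det J(α,u) · U_k′(u₁) = h·g₂(U_n(u₁))·A′(u₁) · det Δ_{k−1}(α,u) for 2 ≤ k ≤ n, where Δ_{k−1}(α,u) is the (k−1)×(k−1) leading principal submatrix of J(α,u) and ′ denotes the derivative with respect to u₁. In particular, if det J(α,u) ≠ 0 then U_k′(u₁) = det Δ_{k−1}(α,u) for 2 ≤ k ≤ n. -/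
/-!
Differentiating the recursion for `U_k` with respect to `u₁` shows that the derivatives
`U₁', U₂', …` satisfy the three-term recurrence `D_{k+1} = Γ_k D_k - D_{k-1}` of the leading
principal minors of the tridiagonal matrix `J(α, u)`, with the same initial values; hence
`U_k' = det Δ_{k-1}`. Expanding `det J` along its last row gives `Γ_n U_n' - U_{n-1}'`, and the
quotient rule for `A = N / g₂(U_n)`, together with `N = α g₂(U_n)` at the solution, gives the same
expression for `h g₂(U_n) A'`.
-/

noncomputable section

section Tridiagonal

variable {R : Type*} [CommRing R]

def tridiag (d : ℕ → R) (m : ℕ) : Matrix (Fin m) (Fin m) R :=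
  Matrix.of fun i j =>
    if i = j then d i else if (i : ℕ) + 1 = j ∨ (j : ℕ) + 1 = i then -1 else 0

lemma tridiag_congr {d e : ℕ → R} {m : ℕ} (h : ∀ i < m, d i = e i) :
    tridiag d m = tridiag e m := by
  ext i j
  simp [tridiag, h i i.isLt]

lemma tridiag_submatrix_castLE (d : ℕ → R) {k m : ℕ} (hkm : k ≤ m) :
    (tridiag d m).submatrix (Fin.castLE hkm) (Fin.castLE hkm) = tridiag d k := by
  ext i j
  simp [tridiag, Fin.ext_iff]

lemma tridiag_apply_eq_zero {d : ℕ → R} {m : ℕ} {i j : Fin m}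
    (hij : (i : ℕ) + 1 < j ∨ (j : ℕ) + 1 < i) : tridiag d m i j = 0 := by
  simp only [tridiag, Matrix.of_apply, Fin.ext_iff]
  split_ifs <;> first | rfl | omega

lemma tridiag_submatrix_castSucc (d : ℕ → R) (m : ℕ) :
    (tridiag d (m + 1)).submatrix Fin.castSucc Fin.castSucc = tridiag d m := by
  ext i j
  simp [tridiag, Fin.ext_iff]

lemma Matrix.det_succ_of_last_row_eq_zero {k : ℕ} (M : Matrix (Fin (k + 1)) (Fin (k + 1)) R)
    (hM : ∀ j : Fin k, M (Fin.last k) j.castSucc = 0) :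
    M.det = M (Fin.last k) (Fin.last k) * (M.submatrix Fin.castSucc Fin.castSucc).det := by
  rw [Matrix.det_succ_row M (Fin.last k), Fin.sum_univ_castSucc]
  simp [hM, ← two_mul, pow_mul]

lemma Matrix.det_succ_of_last_col_eq_zero {k : ℕ} (M : Matrix (Fin (k + 1)) (Fin (k + 1)) R)
    (hM : ∀ i : Fin k, M i.castSucc (Fin.last k) = 0) :
    M.det = M (Fin.last k) (Fin.last k) * (M.submatrix Fin.castSucc Fin.castSucc).det := by
  rw [← M.det_transpose, M.transpose.det_succ_of_last_row_eq_zero hM, ← Matrix.transpose_submatrix,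
    Matrix.det_transpose, Matrix.transpose_apply]

lemma det_tridiag_zero (d : ℕ → R) : (tridiag d 0).det = 1 := Matrix.det_fin_zero

lemma det_tridiag_one (d : ℕ → R) : (tridiag d 1).det = d 0 := by
  simp [tridiag]

lemma det_tridiag_succ_succ (d : ℕ → R) (m : ℕ) :
    (tridiag d (m + 2)).det = d (m + 1) * (tridiag d (m + 1)).det - (tridiag d m).det := by
  rw [Matrix.det_succ_row _ (Fin.last (m + 1)), Fin.sum_univ_castSucc, Fin.sum_univ_castSucc,
    Finset.sum_eq_zero fun j _ => by
      rw [tridiag_apply_eq_zero (by simp), mul_zero, zero_mul]]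
  have hminor : ((tridiag d (m + 2)).submatrix (Fin.last (m + 1)).succAbove
      (Fin.last m).castSucc.succAbove).det = -(tridiag d m).det := by
    rw [Matrix.det_succ_of_last_col_eq_zero _ fun i => ?_]
    · have hcols : (Fin.last m).castSucc.succAbove ∘ Fin.castSucc = Fin.castSucc ∘ Fin.castSucc :=
        funext fun q => Fin.succAbove_castSucc_of_lt _ _ (Fin.castSucc_lt_last q)
      simp only [Matrix.submatrix_submatrix, Matrix.submatrix_apply, Fin.succAbove_last,
        Fin.succAbove_castSucc_self, Fin.succ_last, hcols]
      rw [← Matrix.submatrix_submatrix, tridiag_submatrix_castSucc, tridiag_submatrix_castSucc]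
      simp [tridiag]
    · simp only [Matrix.submatrix_apply, Fin.succAbove_last, Fin.succAbove_castSucc_self,
        Fin.succ_last]
      exact tridiag_apply_eq_zero (by simp)
  simp only [Fin.succAbove_last] at hminor ⊢
  rw [hminor, tridiag_submatrix_castSucc]
  have hoff : tridiag d (m + 2) (Fin.last (m + 1)) (Fin.last m).castSucc = -1 := by
    simp [tridiag, Fin.ext_iff]
  have hdiag : tridiag d (m + 2) (Fin.last (m + 1)) (Fin.last (m + 1)) = d (m + 1) := by
    simp [tridiag]
  simp only [hoff, hdiag, Fin.val_last, Fin.val_castSucc]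
  rw [Odd.neg_one_pow ⟨m, by ring⟩, Even.neg_one_pow ⟨m + 1, rfl⟩]
  ring

end Tridiagonal

lemma pos_of_map_zero_of_deriv_pos {f : ℝ → ℝ} (hf : Continuous f) (hf0 : f 0 = 0)
    (hf' : ∀ x > 0, 0 < deriv f x) {x : ℝ} (hx : 0 < x) : 0 < f x := by
  have hmono : StrictMonoOn f (Set.Ici 0) :=
    strictMonoOn_of_deriv_pos (convex_Ici 0) hf.continuousOn
      (fun y hy => hf' y (by rwa [interior_Ici] at hy))
  simpa [hf0] using hmono Set.self_mem_Ici hx.le hx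

lemma mul_deriv_div_eq_of_eq_mul {f g : ℝ → ℝ} {f' g' x c : ℝ}
    (hf : HasDerivAt f f' x) (hg : HasDerivAt g g' x) (hgx : g x ≠ 0) (hfx : f x = c * g x) :
    g x * deriv (fun y => f y / g y) x = f' - c * g' := by
  rw [(hf.fun_div hg hgx).deriv, hfx]
  field_simp

/-- The diagonal of `J(α, u)` along `u = (U₁(x), U₂(x), …)`, except for its last entry. -/
def useqJacDiag (g1 : ℝ → ℝ) (h x : ℝ) (i : ℕ) : ℝ :=
  if i = 0 then 1 + h ^ 2 / 2 * deriv g1 x else 2 + h ^ 2 * deriv g1 (Useq g1 h i x)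

lemma hasDerivAt_Useq {g1 : ℝ → ℝ} (hg1 : Differentiable ℝ g1) (h x : ℝ) (k : ℕ) :
    HasDerivAt (Useq g1 h k) (tridiag (useqJacDiag g1 h x) k).det x := by
  induction k using Nat.twoStepInduction with
  | zero => simpa [Useq, det_tridiag_zero] using hasDerivAt_id' x
  | one =>
    rw [det_tridiag_one]
    simpa [Useq, useqJacDiag] using
      (hasDerivAt_id' x).fun_add ((hg1 x).hasDerivAt.const_mul (h ^ 2 / 2))
  | more k ih₀ ih₁ =>
    have hrec : HasDerivAt (Useq g1 h (k + 2)) _ x :=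
      ((ih₁.const_mul 2).fun_sub ih₀).fun_add (((hg1 _).hasDerivAt.comp x ih₁).const_mul (h ^ 2))
    refine hrec.congr_deriv ?_
    rw [det_tridiag_succ_succ]
    simp only [useqJacDiag, Nat.add_one_ne_zero, if_false]
    ring

section Solution

variable {g1 g2 : ℝ → ℝ} {n m : ℕ} {h α : ℝ} {u : ℕ → ℝ}

lemma IsSolution.eq_Useq (hu : IsSolution g1 g2 n h α u) :
    ∀ k < n, u (k + 1) = Useq g1 h k (u 1) := by
  intro k
  induction k using Nat.twoStepInduction with
  | zero => intro; rfl
  | one => intro; simp only [Useq]; linarith [hu.2.1]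
  | more k ih₀ ih₁ =>
    intro hk
    have hrec := hu.2.2.1 (k + 2) (by omega) (by omega)
    rw [show k + 2 - 1 = k + 1 by omega] at hrec
    simp only [Useq, ← ih₀ (by omega), ← ih₁ (by omega)]
    linarith

lemma IsSolution.Jmat_eq (hu : IsSolution g1 g2 (m + 2) h α u) :
    Jmat g1 g2 (m + 2) h α u = tridiag (Function.update (useqJacDiag g1 h (u 1)) (m + 1)
      (1 + h ^ 2 / 2 * deriv g1 (u (m + 2)) - h * α * deriv g2 (u (m + 2)))) (m + 2) := by
  ext i j
  by_cases hij : i = j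
  · subst hij
    have hi := i.isLt
    simp only [Jmat, tridiag, Matrix.of_apply, if_true, Function.update_apply, useqJacDiag]
    split_ifs <;> first | omega | simp_all [hu.eq_Useq (i : ℕ) hi]
  · simp [Jmat, tridiag, hij]

lemma IsSolution.det_Jmat_submatrix_castLE (hu : IsSolution g1 g2 (m + 2) h α u) {k : ℕ}
    (hk : k ≤ m + 1) :
    ((Jmat g1 g2 (m + 2) h α u).submatrix (Fin.castLE (by omega : k ≤ m + 2))
      (Fin.castLE (by omega))).det = (tridiag (useqJacDiag g1 h (u 1)) k).det := by
  rw [hu.Jmat_eq, tridiag_submatrix_castLE]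
  exact congrArg _ (tridiag_congr fun i hi => Function.update_of_ne (by omega) _ _)

lemma IsSolution.det_Jmat (hu : IsSolution g1 g2 (m + 2) h α u) :
    (Jmat g1 g2 (m + 2) h α u).det =
      (1 + h ^ 2 / 2 * deriv g1 (u (m + 2)) - h * α * deriv g2 (u (m + 2))) *
        (tridiag (useqJacDiag g1 h (u 1)) (m + 1)).det -
      (tridiag (useqJacDiag g1 h (u 1)) m).det := by
  rw [hu.Jmat_eq, det_tridiag_succ_succ, Function.update_self]
  congr 2 <;> exact congrArg _ (tridiag_congr fun i hi => Function.update_of_ne (by omega) _ _)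

lemma IsSolution.mul_deriv_discA (hg1 : Differentiable ℝ g1) (hg2 : Differentiable ℝ g2)
    (hh : h ≠ 0) (hg2u : g2 (u (m + 2)) ≠ 0) (hu : IsSolution g1 g2 (m + 2) h α u) :
    h * g2 (discU g1 h (m + 2) (u 1)) * deriv (discA g1 g2 h (m + 2)) (u 1) =
      (1 + h ^ 2 / 2 * deriv g1 (u (m + 2)) - h * α * deriv g2 (u (m + 2))) *
        (tridiag (useqJacDiag g1 h (u 1)) (m + 1)).det -
      (tridiag (useqJacDiag g1 h (u 1)) m).det := by
  have hU := hasDerivAt_Useq hg1 h (u 1) (m + 1)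
  have hV := hasDerivAt_Useq hg1 h (u 1) m
  have hUn : u (m + 2) = Useq g1 h (m + 1) (u 1) := hu.eq_Useq (m + 1) (by omega)
  have hVn : u (m + 1) = Useq g1 h m (u 1) := hu.eq_Useq m (by omega)
  have hnum := ((hU.fun_sub hV).div_const h).fun_add
    (((hg1 _).hasDerivAt.comp _ hU).const_mul (h / 2))
  have hden := (hg2 _).hasDerivAt.comp _ hU
  have hboundary : (Useq g1 h (m + 1) (u 1) - Useq g1 h m (u 1)) / h +
      h / 2 * g1 (Useq g1 h (m + 1) (u 1)) = α * g2 (Useq g1 h (m + 1) (u 1)) := by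
    have := hu.2.2.2
    rw [show m + 2 - 1 = m + 1 by omega, hUn, hVn] at this
    field_simp
    linarith
  rw [hUn] at hg2u
  have hquot : g2 (Useq g1 h (m + 1) (u 1)) * deriv (discA g1 g2 h (m + 2)) (u 1) = _ :=
    mul_deriv_div_eq_of_eq_mul hnum hden hg2u hboundary
  rw [show discU g1 h (m + 2) (u 1) = Useq g1 h (m + 1) (u 1) from rfl, mul_assoc, hquot, ← hUn]
  field_simp
  ring

end Solution

theorem stmt_18 (n : ℕ) (hn : 2 ≤ n) (h : ℝ) (hh : h = 1 / ((n : ℝ) - 1))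
    (g1 g2 : ℝ → ℝ)
    (hg1C : ContDiff ℝ 3 g1) (hg2C : ContDiff ℝ 3 g2)
    (hg20 : g2 0 = 0)
    (hg2d : ∀ x > (0:ℝ), 0 < deriv g2 x)
    (α : ℝ) (u : ℕ → ℝ) (hu : IsSolution g1 g2 n h α u) :
    h * g2 (discU g1 h n (u 1)) * deriv (discA g1 g2 h n) (u 1) =
      (Jmat g1 g2 n h α u).det ∧
    (∀ k (hk2 : 2 ≤ k) (hkn : k ≤ n),
      (Jmat g1 g2 n h α u).det * deriv (discU g1 h k) (u 1) =
        h * g2 (discU g1 h n (u 1)) * deriv (discA g1 g2 h n) (u 1) *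
          ((Jmat g1 g2 n h α u).submatrix
            (Fin.castLE (by omega) : Fin (k - 1) → Fin n)
            (Fin.castLE (by omega) : Fin (k - 1) → Fin n)).det) ∧
    ((Jmat g1 g2 n h α u).det ≠ 0 →
      ∀ k (hk2 : 2 ≤ k) (hkn : k ≤ n),
        deriv (discU g1 h k) (u 1) =
          ((Jmat g1 g2 n h α u).submatrix
            (Fin.castLE (by omega) : Fin (k - 1) → Fin n)
            (Fin.castLE (by omega) : Fin (k - 1) → Fin n)).det) := by
  obtain ⟨m, rfl⟩ : ∃ m, n = m + 2 := ⟨n - 2, by omega⟩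
  have hg1 : Differentiable ℝ g1 := hg1C.differentiable (by norm_num)
  have hpos : 0 < h := by
    rw [hh]; push_cast
    exact one_div_pos.2 (by linarith [(Nat.cast_nonneg m : (0 : ℝ) ≤ m)])
  have hg2u : g2 (u (m + 2)) ≠ 0 :=
    (pos_of_map_zero_of_deriv_pos hg2C.continuous hg20 hg2d (hu.1 (m + 2) (by omega) le_rfl)).ne'
  have hdet : h * g2 (discU g1 h (m + 2) (u 1)) * deriv (discA g1 g2 h (m + 2)) (u 1) =
      (Jmat g1 g2 (m + 2) h α u).det := by
    rw [hu.mul_deriv_discA hg1 (hg2C.differentiable (by norm_num)) hpos.ne' hg2u, hu.det_Jmat]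
  have hminor : ∀ k (_ : 2 ≤ k) (_ : k ≤ m + 2), deriv (discU g1 h k) (u 1) =
      ((Jmat g1 g2 (m + 2) h α u).submatrix (Fin.castLE (by omega : k - 1 ≤ m + 2))
        (Fin.castLE (by omega))).det := fun k _ hk =>
    (hasDerivAt_Useq hg1 h (u 1) (k - 1)).deriv.trans
      (hu.det_Jmat_submatrix_castLE (by omega)).symm
  exact ⟨hdet, fun k hk2 hkn => by rw [hdet, hminor k hk2 hkn], fun _ => hminor⟩
end
end
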